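/- arXiv:1302.3501 — 2 statements merged into one kernel-verified Lean document; each statement's English description precedes it below -/
import Mathlib

section
/- Let n, p be positive natural numbers, let Γ be an n×n real positive definite matrix, let C be a p×p real positive definite matrix, let A be an n×p real matrix, and let b ∈ ℝⁿ with b ≠ 0. Define, for α > 0, κ(α) = α² · ((A C Aᵀ + α Γ)⁻¹ b)ᵀ Γ ((A C Aᵀ + α Γ)⁻¹ b). Then for every ρ ∈ (0,1) and every initial guess α₀ > 0, there exists a natural number J such that κ(2^J · α₀) ≥ ρ² · bᵀ Γ⁻¹ b. -/
open Matrix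

/-!
With `M = A C Aᵀ`, since `M + α Γ = α (α⁻¹ M + Γ)`, the weighted residual `κ(α)` equals
`F(α⁻¹)` for `F(ε) = vᵀ Γ v` with `v = (ε M + Γ)⁻¹ b`. As matrix inversion is continuous at
the invertible `Γ`, `F` is continuous at `0` with `F(0) = bᵀ Γ⁻¹ b`, so `κ(α) → bᵀ Γ⁻¹ b` as
`α → ∞`. This limit is positive and `ρ² < 1`, so `κ(2^J α₀)` exceeds `ρ² bᵀ Γ⁻¹ b` for all
large `J`.
-/

open Filter Topology

namespace Matrix

variable {ι : Type*} [Fintype ι] [DecidableEq ι]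

theorem inv_smul_of_ne_zero {K : Type*} [Field K] (N : Matrix ι ι K) {c : K} (hc : c ≠ 0) :
    (c • N)⁻¹ = c⁻¹ • N⁻¹ := by
  by_cases hN : IsUnit N.det
  · exact inv_smul' N (Units.mk0 c hc) hN
  · have hcN : ¬IsUnit (c • N).det := by
      rwa [det_smul, IsUnit.mul_iff, and_iff_right (pow_ne_zero _ hc).isUnit]
    rw [nonsing_inv_apply_not_isUnit _ hN, nonsing_inv_apply_not_isUnit _ hcN, smul_zero]

theorem continuousAt_inv_smul_add (M Γ : Matrix ι ι ℝ) (hΓ : IsUnit Γ.det) :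
    ContinuousAt (fun ε : ℝ => (ε • M + Γ)⁻¹) 0 := by
  have hinv : ContinuousAt Inv.inv ((0 : ℝ) • M + Γ) := by
    rw [zero_smul, zero_add]
    refine continuousAt_matrix_inv Γ ?_
    rw [Ring.inverse_eq_inv']
    exact continuousAt_inv₀ hΓ.ne_zero
  exact hinv.comp (f := fun ε : ℝ => ε • M + Γ) (by fun_prop)

theorem sq_mul_dotProduct_inv_add_smul {M Γ : Matrix ι ι ℝ} (b : ι → ℝ) {α : ℝ} (hα : α ≠ 0) :
    α ^ 2 * (((M + α • Γ)⁻¹ *ᵥ b) ⬝ᵥ (Γ *ᵥ ((M + α • Γ)⁻¹ *ᵥ b))) =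
      ((α⁻¹ • M + Γ)⁻¹ *ᵥ b) ⬝ᵥ (Γ *ᵥ ((α⁻¹ • M + Γ)⁻¹ *ᵥ b)) := by
  have hscale : M + α • Γ = α • (α⁻¹ • M + Γ) := by
    rw [smul_add, smul_smul, mul_inv_cancel₀ hα, one_smul]
  rw [hscale, inv_smul_of_ne_zero _ hα]
  simp only [smul_mulVec, mulVec_smul, smul_dotProduct, dotProduct_smul, smul_eq_mul]
  field_simp

theorem tendsto_sq_mul_dotProduct_inv_add_smul_atTop (M Γ : Matrix ι ι ℝ) (hΓ : IsUnit Γ.det)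
    (b : ι → ℝ) :
    Tendsto (fun α : ℝ => α ^ 2 * (((M + α • Γ)⁻¹ *ᵥ b) ⬝ᵥ (Γ *ᵥ ((M + α • Γ)⁻¹ *ᵥ b))))
      atTop (𝓝 (b ⬝ᵥ (Γ⁻¹ *ᵥ b))) := by
  set F : ℝ → ℝ := fun ε => ((ε • M + Γ)⁻¹ *ᵥ b) ⬝ᵥ (Γ *ᵥ ((ε • M + Γ)⁻¹ *ᵥ b))
  have hF0 : F 0 = b ⬝ᵥ (Γ⁻¹ *ᵥ b) := by
    simp only [F, zero_smul, zero_add, mulVec_mulVec, mul_nonsing_inv _ hΓ, one_mulVec]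
    exact dotProduct_comm _ _
  have hF : ContinuousAt F 0 := by
    have hg : Continuous fun N : Matrix ι ι ℝ => (N *ᵥ b) ⬝ᵥ (Γ *ᵥ (N *ᵥ b)) := by fun_prop
    exact hg.continuousAt.comp (continuousAt_inv_smul_add M Γ hΓ)
  rw [← hF0]
  refine (hF.tendsto.comp tendsto_inv_atTop_zero).congr' ?_
  filter_upwards [eventually_ne_atTop 0] with α hα
  exact (sq_mul_dotProduct_inv_add_smul b hα).symm

end Matrix

theorem stmt_10_general {n p : ℕ}
    (Γ : Matrix (Fin n) (Fin n) ℝ) (C : Matrix (Fin p) (Fin p) ℝ)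
    (A : Matrix (Fin n) (Fin p) ℝ)
    (hΓ : Γ.PosDef)
    (b : Fin n → ℝ) (hb : b ≠ 0)
    (κ : ℝ → ℝ)
    (hκ : ∀ α, κ α = α ^ 2 *
      (((A * C * Aᵀ + α • Γ)⁻¹ *ᵥ b) ⬝ᵥ (Γ *ᵥ ((A * C * Aᵀ + α • Γ)⁻¹ *ᵥ b)))) :
    ∀ ρ : ℝ, ρ ∈ Set.Ioo (0 : ℝ) 1 → ∀ α₀ : ℝ, 0 < α₀ →
      ∃ J : ℕ, ρ ^ 2 * (b ⬝ᵥ (Γ⁻¹ *ᵥ b)) ≤ κ ((2 : ℝ) ^ J * α₀) := by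
  intro ρ hρ α₀ hα₀
  have hL : 0 < b ⬝ᵥ (Γ⁻¹ *ᵥ b) := by simpa using hΓ.inv.dotProduct_mulVec_pos hb
  have hlim : Tendsto κ atTop (𝓝 (b ⬝ᵥ (Γ⁻¹ *ᵥ b))) := by
    rw [funext hκ]
    exact tendsto_sq_mul_dotProduct_inv_add_smul_atTop _ Γ hΓ.det_pos.ne'.isUnit b
  have hdoubling : Tendsto (fun J : ℕ => (2 : ℝ) ^ J * α₀) atTop atTop :=
    (tendsto_pow_atTop_atTop_of_one_lt one_lt_two).atTop_mul_const hα₀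
  have hρL : ρ ^ 2 * (b ⬝ᵥ (Γ⁻¹ *ᵥ b)) < b ⬝ᵥ (Γ⁻¹ *ᵥ b) :=
    mul_lt_of_lt_one_left hL (pow_lt_one₀ hρ.1.le hρ.2 two_ne_zero)
  obtain ⟨J, hJ⟩ := ((hlim.comp hdoubling).eventually (eventually_gt_nhds hρL)).exists
  exact ⟨J, hJ.le⟩

/-- Termination of the doubling search: if `b ≠ 0`, then for every `ρ ∈ (0,1)` and
every initial guess `α₀ > 0` there is a natural number `J` with
`κ(2^J α₀) ≥ ρ² bᵀ Γ⁻¹ b`. -/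
theorem stmt_10 {n p : ℕ} (hn : 0 < n) (hp : 0 < p)
    (Γ : Matrix (Fin n) (Fin n) ℝ) (C : Matrix (Fin p) (Fin p) ℝ)
    (A : Matrix (Fin n) (Fin p) ℝ)
    (hΓ : Γ.PosDef) (hC : C.PosDef)
    (b : Fin n → ℝ) (hb : b ≠ 0)
    (κ : ℝ → ℝ)
    (hκ : ∀ α, κ α = α ^ 2 *
      (((A * C * Aᵀ + α • Γ)⁻¹ *ᵥ b) ⬝ᵥ (Γ *ᵥ ((A * C * Aᵀ + α • Γ)⁻¹ *ᵥ b)))) :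
    ∀ ρ : ℝ, ρ ∈ Set.Ioo (0 : ℝ) 1 → ∀ α₀ : ℝ, 0 < α₀ →
      ∃ J : ℕ, ρ ^ 2 * (b ⬝ᵥ (Γ⁻¹ *ᵥ b)) ≤ κ ((2 : ℝ) ^ J * α₀) :=
  stmt_10_general Γ C A hΓ b hb κ hκ
end

section
/- Let n, p be positive natural numbers, let Γ be an n×n real positive definite matrix, let C be a p×p real positive definite matrix, let A be an n×p real matrix, and let b ∈ ℝⁿ with b ≠ 0. Define, for α > 0, κ(α) = α² · ((A C Aᵀ + α Γ)⁻¹ b)ᵀ Γ ((A C Aᵀ + α Γ)⁻¹ b). Let ρ ∈ (0,1) and suppose there exists α₁ > 0 with κ(α₁) ≤ ρ² · bᵀ Γ⁻¹ b. Then there exists α⋆ > 0 with κ(α⋆) = ρ² · bᵀ Γ⁻¹ b. -/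
/-!
Substituting `t = α⁻¹` turns `κ(α)` into `g(t) = ((tS + Γ)⁻¹b)ᵀ Γ ((tS + Γ)⁻¹b)` with
`S = ACAᵀ`. Since `tS + Γ` is positive definite for every `t ≥ 0`, `g` is continuous on `[0, ∞)`,
and `g(0) = bᵀΓ⁻¹b > ρ² bᵀΓ⁻¹b ≥ g(α₁⁻¹)`. The intermediate value theorem on `[0, α₁⁻¹]` gives a
root `t⋆`, which is nonzero, and `α⋆ = t⋆⁻¹` works.
-/

open Matrix

namespace Matrix

variable {ι K : Type*} [Fintype ι] [DecidableEq ι] [Field K]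

theorem inv_smul_of_ne_zero_s11 {k : K} (hk : k ≠ 0) (A : Matrix ι ι K) :
    (k • A)⁻¹ = k⁻¹ • A⁻¹ := by
  by_cases hA : IsUnit A.det
  · exact inv_smul' (k := Units.mk0 k hk) (h := hA)
  · have hkA : ¬IsUnit (k • A).det := by
      rwa [det_smul, IsUnit.mul_iff, not_and_or, or_iff_right (by simp [hk])]
    rw [nonsing_inv_apply_not_isUnit _ hA, nonsing_inv_apply_not_isUnit _ hkA, smul_zero]

theorem sq_mul_quadForm_inv_add_smul {α : K} (hα : α ≠ 0) (S Γ : Matrix ι ι K)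
    (b : ι → K) :
    α ^ 2 * (((S + α • Γ)⁻¹ *ᵥ b) ⬝ᵥ (Γ *ᵥ ((S + α • Γ)⁻¹ *ᵥ b))) =
      ((α⁻¹ • S + Γ)⁻¹ *ᵥ b) ⬝ᵥ (Γ *ᵥ ((α⁻¹ • S + Γ)⁻¹ *ᵥ b)) := by
  have hsplit : S + α • Γ = α • (α⁻¹ • S + Γ) := by
    rw [smul_add, smul_smul, mul_inv_cancel₀ hα, one_smul]
  rw [hsplit, inv_smul_of_ne_zero_s11 hα]
  simp only [smul_mulVec, mulVec_smul, dotProduct_smul, smul_dotProduct, smul_eq_mul]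
  field_simp

theorem continuousOn_inv_smul_add {S Γ : Matrix ι ι ℝ} (hS : S.PosSemidef)
    (hΓ : Γ.PosDef) : ContinuousOn (fun t : ℝ => (t • S + Γ)⁻¹) (Set.Ici 0) := by
  intro t ht
  have hdet : (t • S + Γ).det ≠ 0 :=
    (PosDef.posSemidef_add (hS.smul (Set.mem_Ici.1 ht)) hΓ).det_pos.ne'
  have hinv : ContinuousAt Inv.inv (t • S + Γ) :=
    continuousAt_matrix_inv _ (by rw [Ring.inverse_eq_inv']; exact continuousAt_inv₀ hdet)
  exact (hinv.comp (f := fun t : ℝ => t • S + Γ) (by fun_prop)).continuousWithinAt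

end Matrix

theorem stmt_11_general {n p : ℕ}
    (Γ : Matrix (Fin n) (Fin n) ℝ) (C : Matrix (Fin p) (Fin p) ℝ)
    (A : Matrix (Fin n) (Fin p) ℝ)
    (hΓ : Γ.PosDef) (hC : C.PosDef)
    (b : Fin n → ℝ) (hb : b ≠ 0)
    (κ : ℝ → ℝ)
    (hκ : ∀ α, κ α = α ^ 2 *
      (((A * C * Aᵀ + α • Γ)⁻¹ *ᵥ b) ⬝ᵥ (Γ *ᵥ ((A * C * Aᵀ + α • Γ)⁻¹ *ᵥ b))))
    (ρ : ℝ) (hρ : ρ ∈ Set.Ioo (0 : ℝ) 1)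
    (α₁ : ℝ) (hα₁ : 0 < α₁) (hle : κ α₁ ≤ ρ ^ 2 * (b ⬝ᵥ (Γ⁻¹ *ᵥ b))) :
    ∃ αstar : ℝ, 0 < αstar ∧ κ αstar = ρ ^ 2 * (b ⬝ᵥ (Γ⁻¹ *ᵥ b)) := by
  set S := A * C * Aᵀ
  have hS : S.PosSemidef := by simpa using hC.posSemidef.mul_mul_conjTranspose_same A
  set g : ℝ → ℝ := fun t => ((t • S + Γ)⁻¹ *ᵥ b) ⬝ᵥ (Γ *ᵥ ((t • S + Γ)⁻¹ *ᵥ b))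
  have hκg : ∀ α ≠ 0, κ α = g α⁻¹ := fun α hα => by
    rw [hκ, sq_mul_quadForm_inv_add_smul hα]
  have hg0 : g 0 = b ⬝ᵥ (Γ⁻¹ *ᵥ b) := by
    simp only [g, zero_smul, zero_add, mulVec_mulVec, mul_nonsing_inv _ hΓ.det_pos.ne'.isUnit,
      one_mulVec, dotProduct_comm]
  have hlt : ρ ^ 2 * g 0 < g 0 := by
    have hpos : 0 < g 0 := hg0 ▸ hΓ.inv.dotProduct_mulVec_pos hb
    have hρ2 : ρ ^ 2 < 1 := by nlinarith [hρ.1, hρ.2]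
    nlinarith
  have hF : Continuous fun X : Matrix (Fin n) (Fin n) ℝ => (X *ᵥ b) ⬝ᵥ (Γ *ᵥ (X *ᵥ b)) := by
    fun_prop
  rw [← hg0, hκg α₁ hα₁.ne'] at hle
  rw [← hg0]
  obtain ⟨t, ht, hgt⟩ := intermediate_value_Icc' (inv_nonneg.2 hα₁.le)
    ((hF.comp_continuousOn (continuousOn_inv_smul_add hS hΓ)).mono Set.Icc_subset_Ici_self)
    ⟨hle, hlt.le⟩
  have ht0 : t ≠ 0 := by rintro rfl; exact hlt.ne' hgt
  exact ⟨t⁻¹, inv_pos.2 (ht.1.lt_of_ne' ht0), by rw [hκg _ (inv_ne_zero ht0), inv_inv]; exact hgt⟩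

/-- If `b ≠ 0`, `ρ ∈ (0,1)`, and there exists `α₁ > 0` with `κ(α₁) ≤ ρ² bᵀΓ⁻¹b`,
then there exists `α⋆ > 0` with `κ(α⋆) = ρ² bᵀΓ⁻¹b`. -/
theorem stmt_11 {n p : ℕ} (hn : 0 < n) (hp : 0 < p)
    (Γ : Matrix (Fin n) (Fin n) ℝ) (C : Matrix (Fin p) (Fin p) ℝ)
    (A : Matrix (Fin n) (Fin p) ℝ)
    (hΓ : Γ.PosDef) (hC : C.PosDef)
    (b : Fin n → ℝ) (hb : b ≠ 0)
    (κ : ℝ → ℝ)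
    (hκ : ∀ α, κ α = α ^ 2 *
      (((A * C * Aᵀ + α • Γ)⁻¹ *ᵥ b) ⬝ᵥ (Γ *ᵥ ((A * C * Aᵀ + α • Γ)⁻¹ *ᵥ b))))
    (ρ : ℝ) (hρ : ρ ∈ Set.Ioo (0 : ℝ) 1)
    (α₁ : ℝ) (hα₁ : 0 < α₁) (hle : κ α₁ ≤ ρ ^ 2 * (b ⬝ᵥ (Γ⁻¹ *ᵥ b))) :
    ∃ αstar : ℝ, 0 < αstar ∧ κ αstar = ρ ^ 2 * (b ⬝ᵥ (Γ⁻¹ *ᵥ b)) :=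
  stmt_11_general Γ C A hΓ hC b hb κ hκ ρ hρ α₁ hα₁ hle
end
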